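/- arXiv:2101.11165 — 6 statements merged into one kernel-verified Lean document; each statement's English description precedes it below -/
import Mathlib

section
/- Let H be a hypergraph and G its incidence graph. Then H is quasi-eulerian if and only if G has a spanning subgraph G' such that deg_{G'}(e) = 2 for every e-vertex e and deg_{G'}(v) is even for every v-vertex v. -/
/-- A closed trail in a hypergraph with vertex type `V` and edge index type `E`,
where `F e` is the set of vertices of the edge (with index) `e`.
It is a sequence `v₀ e₁ v₁ e₂ … e_t v_t` with `t ≥ 2`, consecutive anchors
distinct and both incident with the traversed edge, pairwise distinct edges,
and `v₀ = v_t`. -/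
structure ClosedTrail (V : Type*) (E : Type*) (F : E → Finset V) where
  len : ℕ
  two_le_len : 2 ≤ len
  verts : Fin (len + 1) → V
  edges : Fin len → E
  mem_left : ∀ i : Fin len, verts i.castSucc ∈ F (edges i)
  mem_right : ∀ i : Fin len, verts i.succ ∈ F (edges i)
  verts_ne : ∀ i : Fin len, verts i.castSucc ≠ verts i.succ
  edges_injective : Function.Injective edges
  closed : verts 0 = verts (Fin.last len)

/-- An Euler family: a (finite) collection of pairwise anchor-disjoint and
edge-disjoint closed trails jointly traversing every edge exactly once. -/
def HasEulerFamily (V : Type*) (E : Type*) (F : E → Finset V) : Prop :=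
  ∃ (n : ℕ) (T : Fin n → ClosedTrail V E F),
    (∀ i j : Fin n, i ≠ j →
      ∀ (a : Fin ((T i).len + 1)) (b : Fin ((T j).len + 1)),
        (T i).verts a ≠ (T j).verts b) ∧
    (∀ e : E, ∃! p : (i : Fin n) × Fin ((T i).len), (T p.1).edges p.2 = e)

/-- An Euler tour: a closed trail traversing every edge exactly once. -/
def HasEulerTour (V : Type*) (E : Type*) (F : E → Finset V) : Prop :=
  ∃ T : ClosedTrail V E F, Function.Bijective T.edges

/-- An `ℓ`-covering `k`-hypergraph: `k`-uniform, and every `ℓ`-subset of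
vertices lies in at least one edge. -/
def IsCoveringHypergraph (V : Type*) (E : Type*) (F : E → Finset V)
    (ℓ k : ℕ) : Prop :=
  (∀ e : E, (F e).card = k) ∧
  (∀ S : Finset V, S.card = ℓ → ∃ e : E, S ⊆ F e)

/-- Two vertices are related if they lie in a common edge; the reflexive
transitive (symmetric) closure of this relation gives connectivity by walks. -/
def HypAdj (V : Type*) (E : Type*) (F : E → Finset V) (a b : V) : Prop :=
  ∃ e : E, a ∈ F e ∧ b ∈ F e

/-- The number of connected components of a hypergraph (including trivial
components consisting of a single isolated vertex). -/
noncomputable def numComponents (V : Type*) (E : Type*) (F : E → Finset V) : ℕ :=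
  Nat.card (Quot (HypAdj V E F))

/-- `e` is a cut edge of `H` if removing it increases the number of
connected components. -/
def IsCutEdge (V : Type*) (E : Type*) (F : E → Finset V) (e : E) : Prop :=
  numComponents V E F < numComponents V {e' : E // e' ≠ e} (fun e' => F e'.1)

/-- The incidence graph of a hypergraph: a bipartite simple graph on
`V ⊕ E`, where `Sum.inl v` is adjacent to `Sum.inr e` iff `v ∈ F e`. -/
def incidenceGraph (V : Type*) (E : Type*) (F : E → Finset V) :
    SimpleGraph (V ⊕ E) where
  Adj x y :=
    (∃ v e, x = Sum.inl v ∧ y = Sum.inr e ∧ v ∈ F e) ∨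
    (∃ v e, x = Sum.inr e ∧ y = Sum.inl v ∧ v ∈ F e)
  symm := by
    constructor
    rintro x y (⟨v, e, hx, hy, h⟩ | ⟨v, e, hx, hy, h⟩)
    · exact Or.inr ⟨v, e, hy, hx, h⟩
    · exact Or.inl ⟨v, e, hy, hx, h⟩
  loopless := by
    constructor
    rintro x (⟨v, e, hx, hy, h⟩ | ⟨v, e, hx, hy, h⟩) <;> simp_all

/-!
A spanning subgraph `G'` of the incidence graph with all e-degrees `2` is the same as a choice of
two vertices in every edge, i.e. a loopless multigraph `F' ≤ F`, and the degrees of the v-vertices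
in `G'` are the degrees in this multigraph. An Euler family gives such a multigraph by taking the
two anchors around each edge; its degrees are even because a closed trail leaves every anchor as
often as it enters it. Conversely, in a multigraph with even degrees a longest trail is closed
(an open one has an odd number of its edges at its last anchor, so an unused edge remains there)
and contains every edge at one of its anchors (rotate it to end at that anchor, then extend).
Deleting its edges keeps all degrees even, so induction yields anchor-disjoint closed trails
covering all edges.
-/

open Finset Sum

theorem Finset.mem_iff_eq_or_eq_of_card_eq_two {α : Type*} [DecidableEq α] {s : Finset α}
    {a b x : α} (hs : #s = 2) (ha : a ∈ s) (hb : b ∈ s) (hab : a ≠ b) :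
    x ∈ s ↔ x = a ∨ x = b := by
  have : s = {a, b} :=
    (eq_of_subset_of_card_le (insert_subset ha (singleton_subset_iff.2 hb))
      (by rw [hs, card_pair hab])).symm
  simp [this]

/-- Counting the occurrences of `v` among `f 0, …, f n` in two ways. -/
theorem Nat.card_filter_range_add_ite_eq {α : Type*} [DecidableEq α] (f : ℕ → α) (n : ℕ)
    (v : α) :
    #{i ∈ range n | f i = v} + (if f n = v then 1 else 0) =
      #{i ∈ range n | f (i + 1) = v} + (if f 0 = v then 1 else 0) := by
  simp only [card_filter]
  rw [← sum_range_succ (fun i => if f i = v then 1 else 0), sum_range_succ']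

theorem Fin.card_filter_castSucc_eq_of_eq_last {α : Type*} [DecidableEq α] {n : ℕ}
    (f : Fin (n + 1) → α) (hf : f 0 = f (Fin.last n)) (v : α) :
    #{i : Fin n | f i.castSucc = v} = #{i : Fin n | f i.succ = v} := by
  have h := (Fin.sum_univ_castSucc fun i => if f i = v then 1 else 0).symm.trans
    (Fin.sum_univ_succ fun i => if f i = v then 1 else 0)
  rw [← hf, add_comm] at h
  simpa only [card_filter] using add_left_cancel h

theorem Finset.card_filter_eq_or_eq {α β : Type*} [DecidableEq α] [DecidableEq β]
    (s : Finset α) {f g : α → β} (hfg : ∀ a ∈ s, f a ≠ g a) (b : β) :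
    #{a ∈ s | f a = b ∨ g a = b} = #{a ∈ s | f a = b} + #{a ∈ s | g a = b} := by
  rw [filter_or, card_union_of_disjoint
    (disjoint_filter.2 fun a ha h₁ h₂ => hfg a ha (h₁.trans h₂.symm))]

section

variable {V E : Type*}

section IncidenceGraph

variable {F F' : E → Finset V}

@[simp]
theorem incidenceGraph_adj_inl_inr {v : V} {e : E} :
    (incidenceGraph V E F).Adj (inl v) (inr e) ↔ v ∈ F e := by
  simp [incidenceGraph]

@[simp]
theorem incidenceGraph_not_adj_inl_inl (v w : V) :
    ¬(incidenceGraph V E F).Adj (inl v) (inl w) := by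
  simp [incidenceGraph]

@[simp]
theorem incidenceGraph_not_adj_inr_inr (e f : E) :
    ¬(incidenceGraph V E F).Adj (inr e) (inr f) := by
  simp [incidenceGraph]

theorem incidenceGraph_neighborSet_inr (e : E) :
    (incidenceGraph V E F).neighborSet (inr e) = inl '' (F e : Set V) := by
  ext (v | f) <;> simp [SimpleGraph.adj_comm]

theorem incidenceGraph_neighborSet_inl (v : V) :
    (incidenceGraph V E F).neighborSet (inl v) = inr '' {e | v ∈ F e} := by
  ext (w | e) <;> simp

theorem incidenceGraph_ncard_neighborSet_inr (e : E) :
    ((incidenceGraph V E F).neighborSet (inr e)).ncard = #(F e) := by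
  rw [incidenceGraph_neighborSet_inr, Set.ncard_image_of_injective _ inl_injective,
    Set.ncard_coe_finset]

theorem incidenceGraph_ncard_neighborSet_inl (v : V) :
    ((incidenceGraph V E F).neighborSet (inl v)).ncard = {e | v ∈ F e}.ncard := by
  rw [incidenceGraph_neighborSet_inl, Set.ncard_image_of_injective _ inr_injective]

theorem incidenceGraph_mono (h : F' ≤ F) : incidenceGraph V E F' ≤ incidenceGraph V E F := by
  rintro _ _ (⟨v, e, rfl, rfl, hv⟩ | ⟨v, e, rfl, rfl, hv⟩)
  exacts [Or.inl ⟨v, e, rfl, rfl, h e hv⟩, Or.inr ⟨v, e, rfl, rfl, h e hv⟩]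

theorem exists_eq_incidenceGraph_of_le {G : SimpleGraph (V ⊕ E)}
    (h : G ≤ incidenceGraph V E F) :
    ∃ F' ≤ F, G = incidenceGraph V E F' := by
  classical
  refine ⟨fun e => {v ∈ F e | G.Adj (inl v) (inr e)}, fun e => filter_subset _ _, ?_⟩
  ext (v | e) (w | f)
  · exact iff_of_false (fun hadj => incidenceGraph_not_adj_inl_inl v w (h hadj)) (by simp)
  · simpa using fun hadj => incidenceGraph_adj_inl_inr.1 (h hadj)
  · rw [G.adj_comm, (incidenceGraph V E _).adj_comm]
    simpa using fun hadj => incidenceGraph_adj_inl_inr.1 (h hadj)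
  · exact iff_of_false (fun hadj => incidenceGraph_not_adj_inr_inr e f (h hadj)) (by simp)

/-- Read as a loopless multigraph on `V` whose edge `e` joins the two elements of `F e`,
`F` has all degrees even. -/
def IsEvenMultigraph (F : E → Finset V) : Prop :=
  (∀ e, #(F e) = 2) ∧ ∀ v, Even {e | v ∈ F e}.ncard

theorem exists_le_incidenceGraph_iff :
    (∃ G' : SimpleGraph (V ⊕ E), G' ≤ incidenceGraph V E F ∧
        (∀ e : E, (G'.neighborSet (inr e)).ncard = 2) ∧
        (∀ v : V, Even ((G'.neighborSet (inl v)).ncard))) ↔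
      ∃ F' ≤ F, IsEvenMultigraph F' := by
  simp only [IsEvenMultigraph]
  constructor
  · rintro ⟨G, hle, hG⟩
    obtain ⟨F', hF', rfl⟩ := exists_eq_incidenceGraph_of_le hle
    simp only [incidenceGraph_ncard_neighborSet_inr, incidenceGraph_ncard_neighborSet_inl] at hG
    exact ⟨F', hF', hG⟩
  · rintro ⟨F', hF', hF'even⟩
    refine ⟨incidenceGraph V E F', incidenceGraph_mono hF', ?_⟩
    simpa only [incidenceGraph_ncard_neighborSet_inr, incidenceGraph_ncard_neighborSet_inl]

end IncidenceGraph

namespace ClosedTrail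

variable {F : E → Finset V} [DecidableEq V] (T : ClosedTrail V E F)

def ends (p : Fin T.len) : Finset V := {T.verts p.castSucc, T.verts p.succ}

theorem ends_subset (p : Fin T.len) : T.ends p ⊆ F (T.edges p) :=
  insert_subset (T.mem_left p) (singleton_subset_iff.2 (T.mem_right p))

theorem card_ends (p : Fin T.len) : #(T.ends p) = 2 :=
  card_pair (T.verts_ne p)

theorem even_card_filter_mem_ends (v : V) : Even #{p : Fin T.len | v ∈ T.ends p} := by
  simp only [ends, mem_insert, mem_singleton, eq_comm (a := v)]
  rw [card_filter_eq_or_eq _ (fun p _ => T.verts_ne p),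
    Fin.card_filter_castSucc_eq_of_eq_last T.verts T.closed]
  exact Even.add_self _

end ClosedTrail

theorem HasEulerFamily.exists_le_isEvenMultigraph {F : E → Finset V} (h : HasEulerFamily V E F) :
    ∃ F' ≤ F, IsEvenMultigraph F' := by
  classical
  obtain ⟨n, T, -, huniq⟩ := h
  let σ : ((i : Fin n) × Fin (T i).len) ≃ E :=
    Equiv.ofBijective _ (Function.bijective_iff_existsUnique _ |>.2 huniq)
  refine ⟨fun e => (T (σ.symm e).1).ends (σ.symm e).2, fun e => ?_,
    fun e => (T _).card_ends _, fun v => ?_⟩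
  · exact ((T _).ends_subset _).trans (congrArg F (σ.apply_symm_apply e)).le
  · change Even (σ.symm ⁻¹' {s | v ∈ (T s.1).ends s.2}).ncard
    rw [Set.ncard_preimage_of_injective_subset_range σ.symm.injective (by simp),
      Set.ncard_eq_toFinset_card', Set.toFinset_ofPred, card_filter, Fintype.sum_sigma]
    refine even_sum _ fun i _ => ?_
    simpa only [card_filter] using (T i).even_card_filter_mem_ends v

theorem HasEulerFamily.mono {F F' : E → Finset V} (hle : F ≤ F') (h : HasEulerFamily V E F) :
    HasEulerFamily V E F' := by
  obtain ⟨n, T, hdisj, huniq⟩ := h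
  exact ⟨n, fun i => { T i with
    mem_left := fun p => hle _ ((T i).mem_left p)
    mem_right := fun p => hle _ ((T i).mem_right p) }, hdisj, huniq⟩

theorem hasEulerFamily_of_isEmpty [IsEmpty E] (F : E → Finset V) : HasEulerFamily V E F :=
  ⟨0, Fin.elim0, fun i => i.elim0, isEmptyElim⟩

/-- A trail `v₀ e₁ v₁ … e_t v_t` as in `ClosedTrail`, but possibly open and of any length
`t = len`. Indexing by `ℕ` makes extension and rotation cheap; only `verts i` for `i ≤ len`
and `edges i` for `i < len` matter. -/
structure Trail (V E : Type*) (F : E → Finset V) where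
  len : ℕ
  verts : ℕ → V
  edges : ℕ → E
  mem_left : ∀ i < len, verts i ∈ F (edges i)
  mem_right : ∀ i < len, verts (i + 1) ∈ F (edges i)
  verts_ne : ∀ i < len, verts i ≠ verts (i + 1)
  injOn_edges : Set.InjOn edges (Set.Iio len)

namespace Trail

variable {F : E → Finset V}

def IsClosed (T : Trail V E F) : Prop := T.verts 0 = T.verts T.len

def anchors (T : Trail V E F) : Set V := T.verts '' Set.Iic T.len

/-- The trail of length `0` at `u`; the edge `e` only fills the irrelevant values of `edges`. -/
def nil (u : V) (e : E) : Trail V E F where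
  len := 0
  verts _ := u
  edges _ := e
  mem_left _ h := absurd h (Nat.not_lt_zero _)
  mem_right _ h := absurd h (Nat.not_lt_zero _)
  verts_ne _ h := absurd h (Nat.not_lt_zero _)
  injOn_edges := by simp

theorem two_le_len_of_isClosed {T : Trail V E F} (hc : T.IsClosed) (hpos : 0 < T.len) :
    2 ≤ T.len := by
  by_contra! h
  have h₁ : T.len = 1 := by omega
  exact T.verts_ne 0 (by omega) (hc.trans (congrArg T.verts h₁))

def toClosedTrail (T : Trail V E F) (hc : T.IsClosed) (hpos : 0 < T.len) : ClosedTrail V E F where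
  len := T.len
  two_le_len := two_le_len_of_isClosed hc hpos
  verts i := T.verts i
  edges i := T.edges i
  mem_left i := T.mem_left i i.isLt
  mem_right i := T.mem_right i i.isLt
  verts_ne i := T.verts_ne i i.isLt
  edges_injective _ _ h := Fin.ext (T.injOn_edges (Fin.is_lt _) (Fin.is_lt _) h)
  closed := hc

theorem verts_mod_add_one {T : Trail V E F} (hc : T.IsClosed) (hpos : 0 < T.len) (j : ℕ) :
    T.verts (j % T.len + 1) = T.verts ((j + 1) % T.len) := by
  have h : (j + 1) % T.len = (j % T.len + 1) % T.len := by
    conv_lhs => rw [← Nat.mod_add_div j T.len, add_right_comm, Nat.add_mul_mod_self_left]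
  rcases Nat.lt_or_eq_of_le (Nat.succ_le_of_lt (Nat.mod_lt j hpos)) with hlt | heq
  · rw [h, Nat.mod_eq_of_lt hlt]
  · rw [h, ← Nat.succ_eq_add_one, heq, Nat.mod_self, ← hc]

def rotate (T : Trail V E F) (hc : T.IsClosed) (k : ℕ) : Trail V E F where
  len := T.len
  verts i := T.verts ((k + i) % T.len)
  edges i := T.edges ((k + i) % T.len)
  mem_left _ hi := T.mem_left _ (Nat.mod_lt _ (by omega))
  mem_right i hi := by
    simpa only [← add_assoc, verts_mod_add_one hc (by omega)] using
      T.mem_right _ (Nat.mod_lt (k + i) (by omega))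
  verts_ne i hi := by
    simpa only [← add_assoc, verts_mod_add_one hc (by omega)] using
      T.verts_ne _ (Nat.mod_lt (k + i) (by omega))
  injOn_edges i hi j hj h := by
    simp only [Set.mem_Iio] at hi hj
    have hmod : (k + i) % T.len = (k + j) % T.len :=
      T.injOn_edges (Nat.mod_lt _ (by omega)) (Nat.mod_lt _ (by omega)) h
    simpa [Nat.ModEq, Nat.mod_eq_of_lt hi, Nat.mod_eq_of_lt hj] using
      Nat.ModEq.add_left_cancel' k hmod

theorem rotate_verts_len (T : Trail V E F) (hc : T.IsClosed) {k : ℕ} (hk : k ≤ T.len) :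
    (T.rotate hc k).verts (T.rotate hc k).len = T.verts k := by
  change T.verts ((k + T.len) % T.len) = T.verts k
  rw [Nat.add_mod_right]
  rcases hk.lt_or_eq with hk | rfl
  · rw [Nat.mod_eq_of_lt hk]
  · rw [Nat.mod_self, hc]

theorem mem_iff_eq_or_eq [DecidableEq V] (T : Trail V E F) {i : ℕ} (hi : i < T.len)
    (hF : #(F (T.edges i)) = 2) {v : V} :
    v ∈ F (T.edges i) ↔ v = T.verts i ∨ v = T.verts (i + 1) :=
  mem_iff_eq_or_eq_of_card_eq_two hF (T.mem_left i hi) (T.mem_right i hi) (T.verts_ne i hi)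

variable [DecidableEq E]

def edgeFinset (T : Trail V E F) : Finset E := (range T.len).image T.edges

theorem mem_edgeFinset {T : Trail V E F} {e : E} :
    e ∈ T.edgeFinset ↔ ∃ i < T.len, T.edges i = e := by
  simp [edgeFinset]

theorem card_edgeFinset (T : Trail V E F) : #T.edgeFinset = T.len := by
  rw [edgeFinset, card_image_of_injOn (by simpa using T.injOn_edges), card_range]

@[simp]
theorem edgeFinset_nil (u : V) (e : E) : (nil u e : Trail V E F).edgeFinset = ∅ := by
  simp [edgeFinset, nil]

theorem edgeFinset_rotate (T : Trail V E F) (hc : T.IsClosed) (k : ℕ) :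
    (T.rotate hc k).edgeFinset = T.edgeFinset := by
  refine eq_of_subset_of_card_le (fun e he => ?_) (by rw [card_edgeFinset, card_edgeFinset]; rfl)
  obtain ⟨i, hi, rfl⟩ := mem_edgeFinset.1 he
  exact mem_edgeFinset.2 ⟨_, Nat.mod_lt _ (Nat.zero_lt_of_lt hi), rfl⟩

theorem exists_mem_edgeFinset_of_mem_anchors {T : Trail V E F} (hpos : 0 < T.len) {v : V}
    (hv : v ∈ T.anchors) : ∃ e ∈ T.edgeFinset, v ∈ F e := by
  obtain ⟨k, hk, rfl⟩ := hv
  rcases (Set.mem_Iic.1 hk).lt_or_eq with hk | rfl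
  · exact ⟨T.edges k, mem_edgeFinset.2 ⟨k, hk, rfl⟩, T.mem_left k hk⟩
  · have hlast : T.len - 1 + 1 = T.len := by omega
    exact ⟨T.edges (T.len - 1), mem_edgeFinset.2 ⟨_, by omega, rfl⟩,
      hlast ▸ T.mem_right _ (by omega)⟩

def snoc (T : Trail V E F) (e : E) (w : V) (hv : T.verts T.len ∈ F e) (hw : w ∈ F e)
    (hne : T.verts T.len ≠ w) (he : e ∉ T.edgeFinset) : Trail V E F where
  len := T.len + 1
  verts i := if i ≤ T.len then T.verts i else w
  edges i := if i < T.len then T.edges i else e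
  mem_left i hi := by
    rcases Nat.lt_succ_iff_lt_or_eq.1 hi with hi | rfl
    · simpa [hi, hi.le] using T.mem_left i hi
    · simpa using hv
  mem_right i hi := by
    rcases Nat.lt_succ_iff_lt_or_eq.1 hi with hi | rfl
    · simpa [hi, Nat.succ_le_of_lt hi] using T.mem_right i hi
    · simpa using hw
  verts_ne i hi := by
    rcases Nat.lt_succ_iff_lt_or_eq.1 hi with hi | rfl
    · simpa [hi.le, Nat.succ_le_of_lt hi] using T.verts_ne i hi
    · simpa using hne
  injOn_edges i hi j hj h := by
    have hnew : ∀ k < T.len, T.edges k ≠ e := fun k hk hke =>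
      he (mem_edgeFinset.2 ⟨k, hk, hke⟩)
    simp only [Set.mem_Iio] at hi hj
    by_cases hi' : i < T.len <;> by_cases hj' : j < T.len <;>
      simp only [hi', hj', if_true, if_false] at h
    · exact T.injOn_edges hi' hj' h
    · exact absurd h (hnew i hi')
    · exact absurd h.symm (hnew j hj')
    · omega

theorem edgeFinset_snoc (T : Trail V E F) (e : E) (w : V) (hv : T.verts T.len ∈ F e)
    (hw : w ∈ F e) (hne : T.verts T.len ≠ w) (he : e ∉ T.edgeFinset) :
    (T.snoc e w hv hw hne he).edgeFinset = insert e T.edgeFinset := by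
  rw [edgeFinset, edgeFinset, show (T.snoc e w hv hw hne he).len = T.len + 1 from rfl,
    range_add_one, image_insert]
  simp only [snoc, lt_irrefl, if_false]
  congr 1
  exact image_congr fun i hi => if_pos (mem_range.1 hi)

theorem exists_extend (T : Trail V E F) {e : E} (hF : #(F e) = 2) (hv : T.verts T.len ∈ F e)
    (he : e ∉ T.edgeFinset) :
    ∃ T' : Trail V E F, T'.len = T.len + 1 ∧ T'.edgeFinset = insert e T.edgeFinset := by
  obtain ⟨w, hw, hne⟩ := exists_mem_ne (hF ▸ one_lt_two) (T.verts T.len)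
  exact ⟨T.snoc e w hv hw hne.symm he, rfl, T.edgeFinset_snoc e w hv hw hne.symm he⟩

theorem card_filter_edgeFinset [DecidableEq V] (T : Trail V E F) (hF : ∀ e, #(F e) = 2)
    (v : V) :
    #{e ∈ T.edgeFinset | v ∈ F e} =
      #{i ∈ range T.len | T.verts i = v ∨ T.verts (i + 1) = v} := by
  rw [edgeFinset, filter_image,
    card_image_of_injOn (T.injOn_edges.mono fun i hi => mem_range.1 (mem_filter.1 hi).1)]
  refine congrArg card (filter_congr fun i hi => ?_)
  rw [T.mem_iff_eq_or_eq (mem_range.1 hi) (hF _), eq_comm, @eq_comm _ v]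

theorem even_card_filter_edgeFinset_iff [DecidableEq V] (T : Trail V E F)
    (hF : ∀ e, #(F e) = 2) (v : V) :
    Even #{e ∈ T.edgeFinset | v ∈ F e} ↔ (T.verts 0 = v ↔ T.verts T.len = v) := by
  have hshift := Nat.card_filter_range_add_ite_eq T.verts T.len v
  rw [card_filter_edgeFinset T hF,
    card_filter_eq_or_eq _ (fun i hi => T.verts_ne i (mem_range.1 hi)), Nat.even_iff]
  by_cases h₀ : T.verts 0 = v <;> by_cases hn : T.verts T.len = v <;>
    simp [h₀, hn] at hshift ⊢ <;> omega

theorem even_card_filter_sdiff_edgeFinset [DecidableEq V] {S : Finset E} {T : Trail V E F}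
    (hF : ∀ e, #(F e) = 2) (hc : T.IsClosed) (hTS : T.edgeFinset ⊆ S)
    (heven : ∀ v, Even #{e ∈ S | v ∈ F e}) (v : V) :
    Even #{e ∈ S \ T.edgeFinset | v ∈ F e} := by
  have hsdiff : {e ∈ S \ T.edgeFinset | v ∈ F e} =
      {e ∈ S | v ∈ F e} \ {e ∈ T.edgeFinset | v ∈ F e} := by
    ext e
    simp only [mem_filter, mem_sdiff]
    tauto
  have hsub := filter_subset_filter (fun e => v ∈ F e) hTS
  rw [hsdiff, card_sdiff_of_subset hsub, Nat.even_sub (card_le_card hsub)]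
  exact iff_of_true (heven v) ((T.even_card_filter_edgeFinset_iff hF v).2 (hc ▸ Iff.rfl))

def IsLongestIn (T : Trail V E F) (S : Finset E) : Prop :=
  T.edgeFinset ⊆ S ∧ ∀ T' : Trail V E F, T'.edgeFinset ⊆ S → T'.len ≤ T.len

theorem exists_isLongestIn (S : Finset E) (T₀ : Trail V E F) (h₀ : T₀.edgeFinset ⊆ S) :
    ∃ T : Trail V E F, T.IsLongestIn S ∧ T₀.len ≤ T.len := by
  let L : Set ℕ := {n | ∃ T : Trail V E F, T.edgeFinset ⊆ S ∧ T.len = n}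
  have hbdd : BddAbove L :=
    ⟨#S, by rintro _ ⟨T, hT, rfl⟩; exact T.card_edgeFinset ▸ card_le_card hT⟩
  have hmem : T₀.len ∈ L := ⟨T₀, h₀, rfl⟩
  obtain ⟨T, hT, hlen⟩ := Nat.sSup_mem ⟨_, hmem⟩ hbdd
  exact ⟨T, ⟨hT, fun T' hT' => hlen ▸ le_csSup hbdd ⟨T', hT', rfl⟩⟩,
    hlen ▸ le_csSup hbdd hmem⟩

namespace IsLongestIn

variable {S : Finset E} {T : Trail V E F}

theorem mem_edgeFinset_of_last_mem (hT : T.IsLongestIn S) {e : E} (hF : #(F e) = 2)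
    (he : e ∈ S) (hv : T.verts T.len ∈ F e) : e ∈ T.edgeFinset := by
  by_contra h
  obtain ⟨T', hlen, hedges⟩ := T.exists_extend hF hv h
  have := hT.2 T' (hedges ▸ insert_subset he hT.1)
  omega

theorem mem_edgeFinset_of_anchor_mem (hT : T.IsLongestIn S) (hc : T.IsClosed) {e : E}
    (hF : #(F e) = 2) (he : e ∈ S) {v : V} (hv : v ∈ T.anchors) (hve : v ∈ F e) :
    e ∈ T.edgeFinset := by
  obtain ⟨k, hk, rfl⟩ := hv
  have hT' : (T.rotate hc k).IsLongestIn S := by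
    rw [IsLongestIn, edgeFinset_rotate]
    exact hT
  rw [← T.edgeFinset_rotate hc k]
  exact hT'.mem_edgeFinset_of_last_mem hF he ((T.rotate_verts_len hc hk).symm ▸ hve)

theorem isClosed [DecidableEq V] (hT : T.IsLongestIn S) (hF : ∀ e, #(F e) = 2)
    (heven : ∀ v, Even #{e ∈ S | v ∈ F e}) : T.IsClosed := by
  by_contra hc
  set v := T.verts T.len
  have hodd : ¬Even #{e ∈ T.edgeFinset | v ∈ F e} := by
    rw [T.even_card_filter_edgeFinset_iff hF]
    exact fun h => hc (h.2 rfl)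
  have hsub : {e ∈ T.edgeFinset | v ∈ F e} ⊂ {e ∈ S | v ∈ F e} :=
    (filter_subset_filter _ hT.1).ssubset_of_ne fun h => hodd (h ▸ heven v)
  obtain ⟨e, he, he'⟩ := exists_of_ssubset hsub
  rw [mem_filter] at he
  exact he' (mem_filter.2 ⟨hT.mem_edgeFinset_of_last_mem (hF e) he.1 he.2, he.2⟩)

end IsLongestIn

/-- Peel off a longest trail: it is closed, and every remaining edge avoids its anchors. -/
theorem exists_decomposition [DecidableEq V] (hF : ∀ e, #(F e) = 2) (S : Finset E)
    (heven : ∀ v, Even #{e ∈ S | v ∈ F e}) :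
    ∃ Ts : List (Trail V E F), (∀ T ∈ Ts, T.IsClosed ∧ 0 < T.len ∧ T.edgeFinset ⊆ S) ∧
      Ts.Pairwise (fun T T' => Disjoint T.anchors T'.anchors ∧
        Disjoint T.edgeFinset T'.edgeFinset) ∧
      ∀ e ∈ S, ∃ T ∈ Ts, e ∈ T.edgeFinset := by
  induction S using Finset.strongInduction with
  | H S ih =>
  rcases S.eq_empty_or_nonempty with rfl | ⟨e, he⟩
  · exact ⟨[], by simp, .nil, by simp⟩
  obtain ⟨u, hu⟩ := card_pos.1 ((hF e).symm ▸ two_pos : 0 < #(F e))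
  obtain ⟨T₀, hlen₀, hT₀⟩ := (nil u e : Trail V E F).exists_extend (hF e) hu (by simp)
  obtain ⟨T, hT, hlen⟩ := exists_isLongestIn S T₀ (by simpa [hT₀] using he)
  have hc := hT.isClosed hF heven
  have hpos : 0 < T.len := by simp only [nil] at hlen₀; omega
  have hS' : S \ T.edgeFinset ⊂ S :=
    sdiff_ssubset hT.1 (card_pos.1 (T.card_edgeFinset ▸ hpos))
  obtain ⟨Ts, hTs, hpair, hcover⟩ :=
    ih _ hS' (even_card_filter_sdiff_edgeFinset hF hc hT.1 heven)
  refine ⟨T :: Ts, ?_, List.pairwise_cons.2 ⟨fun T' hT' => ?_, hpair⟩, fun e' he' => ?_⟩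
  · simp only [List.mem_cons, forall_eq_or_imp]
    exact ⟨⟨hc, hpos, hT.1⟩, fun T' hT' =>
      (hTs T' hT').imp_right (And.imp_right fun h => h.trans sdiff_subset)⟩
  · obtain ⟨-, hpos', hT'S⟩ := hTs T' hT'
    refine ⟨Set.disjoint_left.2 fun v hv hv' => ?_,
      disjoint_of_subset_right hT'S disjoint_sdiff⟩
    obtain ⟨e', he', hve'⟩ := exists_mem_edgeFinset_of_mem_anchors hpos' hv'
    obtain ⟨he'S, he'T⟩ := mem_sdiff.1 (hT'S he')
    exact he'T (hT.mem_edgeFinset_of_anchor_mem hc (hF e') he'S hv hve')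
  · by_cases h : e' ∈ T.edgeFinset
    · exact ⟨T, List.mem_cons_self, h⟩
    · obtain ⟨T', hT', h'⟩ := hcover e' (mem_sdiff.2 ⟨he', h⟩)
      exact ⟨T', List.mem_cons_of_mem _ hT', h'⟩

theorem hasEulerFamily (Ts : List (Trail V E F)) (hTs : ∀ T ∈ Ts, T.IsClosed ∧ 0 < T.len)
    (hpair : Ts.Pairwise fun T T' => Disjoint T.anchors T'.anchors ∧
      Disjoint T.edgeFinset T'.edgeFinset)
    (hcover : ∀ e, ∃ T ∈ Ts, e ∈ T.edgeFinset) :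
    HasEulerFamily V E F := by
  have hdisj (i j : Fin Ts.length) (hij : i ≠ j) :
      Disjoint Ts[i].anchors Ts[j].anchors ∧ Disjoint Ts[i].edgeFinset Ts[j].edgeFinset := by
    rcases lt_or_gt_of_ne hij with h | h
    · exact List.pairwise_iff_getElem.1 hpair i j i.2 j.2 h
    · exact (List.pairwise_iff_getElem.1 hpair j i j.2 i.2 h).imp (·.symm) (·.symm)
  refine ⟨Ts.length, fun i => Ts[i].toClosedTrail (hTs _ (List.getElem_mem _)).1
    (hTs _ (List.getElem_mem _)).2, fun i j hij a b hab => ?_, fun e => ?_⟩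
  · exact Set.disjoint_left.1 (hdisj i j hij).1 ⟨a, Nat.lt_succ_iff.1 a.2, rfl⟩
      ⟨b, Nat.lt_succ_iff.1 b.2, hab.symm⟩
  obtain ⟨T, hT, he⟩ := hcover e
  obtain ⟨i, hi, rfl⟩ := List.getElem_of_mem hT
  obtain ⟨k, hk, rfl⟩ := mem_edgeFinset.1 he
  refine ⟨⟨⟨i, hi⟩, ⟨k, hk⟩⟩, rfl, fun ⟨j, q⟩ hq => ?_⟩
  replace hq : Ts[j].edges q = Ts[i].edges k := hq
  by_cases hij : j = ⟨i, hi⟩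
  · subst hij
    exact Sigma.ext rfl (heq_of_eq (Fin.ext (Ts[i].injOn_edges q.2 hk hq)))
  · exact (disjoint_left.1 (hdisj j ⟨i, hi⟩ hij).2 (mem_edgeFinset.2 ⟨q, q.2, hq⟩)
      (mem_edgeFinset.2 ⟨k, hk, rfl⟩)).elim

end Trail

theorem IsEvenMultigraph.hasEulerFamily [Finite E] {F : E → Finset V} (hF : IsEvenMultigraph F) :
    HasEulerFamily V E F := by
  classical
  have := Fintype.ofFinite E
  obtain ⟨Ts, hTs, hpair, hcover⟩ := Trail.exists_decomposition hF.1 univ fun v => by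
    simpa [← Set.ncard_coe_finset] using hF.2 v
  exact Trail.hasEulerFamily Ts (fun T hT => ⟨(hTs T hT).1, (hTs T hT).2.1⟩) hpair
    fun e => hcover e (mem_univ e)

end

theorem quasiEulerian_iff_incidence_general {V E : Type*} [Fintype E]
    (F : E → Finset V) :
    (IsEmpty E ∨ HasEulerFamily V E F) ↔
      ∃ G' : SimpleGraph (V ⊕ E), G' ≤ incidenceGraph V E F ∧
        (∀ e : E, (G'.neighborSet (Sum.inr e)).ncard = 2) ∧
        (∀ v : V, Even ((G'.neighborSet (Sum.inl v)).ncard)) := by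
  rw [or_iff_right_of_imp fun (_ : IsEmpty E) => hasEulerFamily_of_isEmpty F,
    exists_le_incidenceGraph_iff]
  exact ⟨HasEulerFamily.exists_le_isEvenMultigraph,
    fun ⟨F', hle, hF'⟩ => hF'.hasEulerFamily.mono hle⟩

/-- A hypergraph `H` is quasi-eulerian (empty or admits an Euler
family) iff its incidence graph has a spanning subgraph `G'` in which every
e-vertex has degree 2 and every v-vertex has even degree. -/
theorem quasiEulerian_iff_incidence {V E : Type*} [Fintype V] [Nonempty V] [Fintype E]
    (F : E → Finset V) :
    (IsEmpty E ∨ HasEulerFamily V E F) ↔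
      ∃ G' : SimpleGraph (V ⊕ E), G' ≤ incidenceGraph V E F ∧
        (∀ e : E, (G'.neighborSet (Sum.inr e)).ncard = 2) ∧
        (∀ v : V, Even ((G'.neighborSet (Sum.inl v)).ncard)) :=
  quasiEulerian_iff_incidence_general F
end

section
/- Let k ≥ 4, and let H be a 2-covering k-hypergraph with at least two edges. Then H has no cut edges. -/
/-! If another edge `g` has the same `k` vertices as `e`, then `g` replaces `e`. Otherwise some vertex
`c ∈ F g` lies outside `F e`, so for any two vertices `a b` of `e` the edges covering `{a, c}` and
`{c, b}` differ from `e` and join `a` to `b` in `H ∖ e`. Since every pair of vertices of `e` stays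
connected, deleting `e` leaves the components unchanged. -/

section

variable {V E : Type*} (F : E → Finset V)

def deleteEdgeQuotEquiv {e : E}
    (h : ∀ a ∈ F e, ∀ b ∈ F e,
      Quot.mk (HypAdj V {e' : E // e' ≠ e} fun e' => F e'.1) a = Quot.mk _ b) :
    Quot (HypAdj V {e' : E // e' ≠ e} fun e' => F e'.1) ≃ Quot (HypAdj V E F) where
  toFun := Quot.map id fun _ _ ⟨f, ha, hb⟩ => ⟨f.1, ha, hb⟩
  invFun := Quot.lift (Quot.mk _) fun a b ⟨f, ha, hb⟩ => by
    rcases eq_or_ne f e with rfl | hf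
    exacts [h a ha b hb, Quot.sound ⟨⟨f, hf⟩, ha, hb⟩]
  left_inv := by rintro ⟨a⟩; rfl
  right_inv := by rintro ⟨a⟩; rfl

theorem not_isCutEdge_of_quot_mk_eq {e : E}
    (h : ∀ a ∈ F e, ∀ b ∈ F e,
      Quot.mk (HypAdj V {e' : E // e' ≠ e} fun e' => F e'.1) a = Quot.mk _ b) :
    ¬ IsCutEdge V E F e := by
  rw [IsCutEdge, numComponents, numComponents, Nat.card_congr (deleteEdgeQuotEquiv F h)]
  exact lt_irrefl _

theorem quot_mk_eq_deleteEdge_of_isCoveringHypergraph {k : ℕ}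
    (hcov : IsCoveringHypergraph V E F 2 k) {e g : E} (hge : g ≠ e) (a b : V) :
    Quot.mk (HypAdj V {e' : E // e' ≠ e} fun e' => F e'.1) a = Quot.mk _ b := by
  classical
  obtain ⟨huniform, hcover⟩ := hcov
  have join_of_mem : ∀ f ≠ e, ∀ x ∈ F f, ∀ y ∈ F f,
      Quot.mk (HypAdj V {e' : E // e' ≠ e} fun e' => F e'.1) x = Quot.mk _ y :=
    fun f hf x hx y hy => Quot.sound ⟨⟨f, hf⟩, hx, hy⟩
  have join_of_not_mem : ∀ x y, x ∉ F e →
      Quot.mk (HypAdj V {e' : E // e' ≠ e} fun e' => F e'.1) x = Quot.mk _ y := by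
    intro x y hx
    rcases eq_or_ne x y with rfl | hxy
    · rfl
    obtain ⟨f, hf⟩ := hcover {x, y} (Finset.card_pair hxy)
    exact join_of_mem f (by rintro rfl; exact hx (hf (by simp))) x (hf (by simp)) y (hf (by simp))
  by_cases hsub : F g ⊆ F e
  · by_cases hab : a ∈ F e ∧ b ∈ F e
    · have hFg : F g = F e :=
        Finset.eq_of_subset_of_card_le hsub (by rw [huniform, huniform])
      exact join_of_mem g hge a (hFg ▸ hab.1) b (hFg ▸ hab.2)
    · rcases not_and_or.mp hab with ha | hb
      · exact join_of_not_mem a b ha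
      · exact (join_of_not_mem b a hb).symm
  · obtain ⟨c, -, hc⟩ := Finset.not_subset.mp hsub
    exact (join_of_not_mem c a hc).symm.trans (join_of_not_mem c b hc)

end

theorem twoCovering_no_cut_edges_general {V E : Type*} [Fintype E]
    (k : ℕ)
    (F : E → Finset V)
    (hcov : IsCoveringHypergraph V E F 2 k)
    (hE : 2 ≤ Fintype.card E) :
    ∀ e : E, ¬ IsCutEdge V E F e := by
  intro e
  obtain ⟨g, hge⟩ : ∃ g, g ≠ e := Fintype.exists_ne_of_one_lt_card hE e
  exact not_isCutEdge_of_quot_mk_eq F fun a _ b _ =>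
    quot_mk_eq_deleteEdge_of_isCoveringHypergraph F hcov hge a b

/-- For `k ≥ 4`, a 2-covering k-hypergraph with at least two
edges has no cut edges. -/
theorem twoCovering_no_cut_edges {V E : Type*} [Fintype V] [Nonempty V] [Fintype E]
    (k : ℕ) (hk : 4 ≤ k)
    (F : E → Finset V)
    (hcov : IsCoveringHypergraph V E F 2 k)
    (hE : 2 ≤ Fintype.card E) :
    ∀ e : E, ¬ IsCutEdge V E F e :=
  twoCovering_no_cut_edges_general k F hcov hE
end

section
/- Let k ≥ 4, and let H be a 2-covering k-hypergraph of order n and size m with n > 3k/2 and m ≥ 2. Then m ≥ 2·⌊(n+3)/k⌋. -/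
/-!
Every vertex `v` lies in some edge with each of the other `n - 1` vertices, and each edge through
`v` accounts for only `k - 1` of them, so `deg v ≥ ⌈(n - 1)/(k - 1)⌉`. Double counting incidences
gives `m k ≥ n · min deg`. For `⌊(n + 3)/k⌋ = 2` this yields `deg ≥ 2` and `m k ≥ 2n > 3k`; for
`⌊(n + 3)/k⌋ ≥ 3` the order is at least `3k - 3`, so `deg ≥ 3` and `m k ≥ 3n ≥ 2(n + 3)`.
-/

open Finset

namespace Hypergraph

variable {V E : Type*} [Fintype V] [Fintype E] [DecidableEq V]

def incidentEdges (F : E → Finset V) (v : V) : Finset E := {e | v ∈ F e}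

def degree (F : E → Finset V) (v : V) : ℕ := #(incidentEdges F v)

theorem sum_degree_eq_sum_card (F : E → Finset V) : ∑ v, degree F v = ∑ e, #(F e) := by
  have := sum_card_bipartiteAbove_eq_sum_card_bipartiteBelow (s := univ) (t := univ)
    (r := fun v e => v ∈ F e)
  simpa [bipartiteAbove, bipartiteBelow, degree, incidentEdges] using this

end Hypergraph

namespace IsCoveringHypergraph

open Hypergraph

variable {V E : Type*} [Fintype V] [Fintype E] [DecidableEq V] {F : E → Finset V} {k : ℕ}

theorem card_sub_one_le_degree_mul (hcov : IsCoveringHypergraph V E F 2 k) (v : V) :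
    Fintype.card V - 1 ≤ degree F v * (k - 1) := by
  have hcover : univ.erase v ⊆ (incidentEdges F v).biUnion fun e => (F e).erase v := by
    intro u hu
    have huv : u ≠ v := ne_of_mem_erase hu
    obtain ⟨e, he⟩ := hcov.2 {v, u} (card_pair huv.symm)
    exact mem_biUnion.2 ⟨e, mem_filter.2 ⟨mem_univ e, he (mem_insert_self v _)⟩,
      mem_erase.2 ⟨huv, he (mem_insert_of_mem (mem_singleton_self u))⟩⟩
  calc Fintype.card V - 1 = #(univ.erase v) := by rw [card_erase_of_mem (mem_univ v), card_univ]
    _ ≤ #((incidentEdges F v).biUnion fun e => (F e).erase v) := card_le_card hcover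
    _ ≤ degree F v * (k - 1) := card_biUnion_le_card_mul _ _ _ fun e he => by
      rw [card_erase_of_mem (mem_filter.1 he).2, hcov.1 e]

theorem card_mul_succ_le_card_mul (hcov : IsCoveringHypergraph V E F 2 k) {c : ℕ}
    (hc : c * (k - 1) < Fintype.card V - 1) :
    Fintype.card V * (c + 1) ≤ Fintype.card E * k := by
  have hdeg (v : V) : c + 1 ≤ degree F v := by
    by_contra! h
    have := Nat.mul_le_mul_right (k - 1) (Nat.le_of_lt_succ h)
    have := hcov.card_sub_one_le_degree_mul v
    omega
  calc Fintype.card V * (c + 1) = ∑ _v : V, (c + 1) := by simp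
    _ ≤ ∑ v, degree F v := sum_le_sum fun v _ => hdeg v
    _ = Fintype.card E * k := by simp [sum_degree_eq_sum_card, hcov.1]

end IsCoveringHypergraph

theorem twoCovering_size_lower_bound_general {V E : Type*} [Fintype V] [Fintype E]
    (k : ℕ) (hk : 4 ≤ k)
    (F : E → Finset V)
    (hcov : IsCoveringHypergraph V E F 2 k)
    (hn : 3 * k < 2 * Fintype.card V)
    (hm : 2 ≤ Fintype.card E) :
    2 * ((Fintype.card V + 3) / k) ≤ Fintype.card E := by
  classical
  set n := Fintype.card V
  set m := Fintype.card E
  set t := (n + 3) / k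
  have htk : t * k ≤ n + 3 := Nat.div_mul_le_self _ _
  obtain ht | ht | ht : t ≤ 1 ∨ t = 2 ∨ 3 ≤ t := by omega
  · omega
  · have h2n : n * 2 ≤ m * k := hcov.card_mul_succ_le_card_mul (c := 1) (by omega)
    have : 3 < m := Nat.lt_of_mul_lt_mul_right (a := k) (by omega)
    omega
  · have h3k : 3 * k ≤ t * k := Nat.mul_le_mul_right k ht
    have h3n : n * 3 ≤ m * k := hcov.card_mul_succ_le_card_mul (c := 2) (by omega)
    exact Nat.le_of_mul_le_mul_right (by rw [mul_assoc]; omega) (by omega : 0 < k)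

/-- For `k ≥ 4`, a 2-covering k-hypergraph of order `n > 3k/2`
and size `m ≥ 2` satisfies `m ≥ 2⌊(n+3)/k⌋`. -/
theorem twoCovering_size_lower_bound {V E : Type*} [Fintype V] [Nonempty V] [Fintype E]
    (k : ℕ) (hk : 4 ≤ k)
    (F : E → Finset V)
    (hcov : IsCoveringHypergraph V E F 2 k)
    (hn : 3 * k < 2 * Fintype.card V)
    (hm : 2 ≤ Fintype.card E) :
    2 * ((Fintype.card V + 3) / k) ≤ Fintype.card E :=
  twoCovering_size_lower_bound_general k hk F hcov hn hm
end

section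
/- Let H be a hypergraph with at least two edges such that every two edges of H intersect in at least 2 vertices, and such that there exist two distinct edges e, f of H with |e ∩ f| ≥ 3. Then H admits an Euler tour. -/
/-!
Enumerate the edges cyclically as `d 0 = e, d 1, …, d (m - 1) = f`, so that the pair
`(f, e)` with at least three common vertices closes the cycle. Walk along the cycle choosing the
anchor between `d j` and `d (j + 1)` in their intersection, different from the previous anchor;
two common vertices always suffice for this. The anchor between `f` and `e` is chosen last and
must differ from its two neighbours, which the third common vertex of `e` and `f` allows.
-/

open Finset

theorem exists_seq_succ_mem_ne {V : Type*} (S : ℕ → Finset V) (x : V) :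
    ∃ g : ℕ → V, g 0 = x ∧ ∀ j, 1 < #(S j) → g (j + 1) ∈ S j ∧ g (j + 1) ≠ g j := by
  have hnext : ∀ j (v : V), ∃ u, 1 < #(S j) → u ∈ S j ∧ u ≠ v := fun j v => by
    by_cases h : 1 < #(S j)
    · obtain ⟨u, hu, huv⟩ := exists_mem_ne h v
      exact ⟨u, fun _ => ⟨hu, huv⟩⟩
    · exact ⟨v, fun h' => absurd h' h⟩
  choose next hnext using hnext
  exact ⟨fun n => Nat.rec x (fun j v => next j v) n, rfl, fun j => hnext j _⟩

theorem exists_closed_seq_of_card_inter {V : Type*} [DecidableEq V] {m : ℕ} (hm : 2 ≤ m)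
    (A : ℕ → Finset V) (h2 : ∀ j, j + 1 < m → 2 ≤ #(A j ∩ A (j + 1)))
    (h3 : 3 ≤ #(A (m - 1) ∩ A 0)) :
    ∃ w : ℕ → V, w 0 = w m ∧ ∀ i < m, w i ∈ A i ∧ w (i + 1) ∈ A i ∧ w i ≠ w (i + 1) := by
  obtain ⟨x, -⟩ := card_pos.1 (by omega : 0 < #(A (m - 1) ∩ A 0))
  obtain ⟨g, -, hg⟩ := exists_seq_succ_mem_ne (fun j => A j ∩ A (j + 1)) x
  have hgA : ∀ j, j + 1 < m → g (j + 1) ∈ A j ∧ g (j + 1) ∈ A (j + 1) ∧ g (j + 1) ≠ g j :=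
    fun j hj => by simpa only [mem_inter, and_assoc] using hg j (by have := h2 j hj; omega)
  obtain ⟨y, hy, hyg⟩ : ∃ y ∈ A (m - 1) ∩ A 0, y ∉ ({g (m - 1), g 1} : Finset V) :=
    exists_mem_notMem_of_card_lt_card (card_le_two.trans_lt (by omega))
  simp only [mem_inter, mem_insert, mem_singleton, not_or] at hy hyg
  refine ⟨fun i => if i = 0 ∨ i = m then y else g i, by simp, fun i hi => ?_⟩
  rcases i with _ | k
  · simpa [show 1 ≠ m by omega, hy.2, (hgA 0 (by omega)).1] using hyg.2
  · obtain ⟨-, hk, -⟩ := hgA k (by omega)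
    by_cases hkm : k + 2 = m
    · subst hkm
      simpa [hk] using ⟨hy.1, Ne.symm hyg.1⟩
    · obtain ⟨hk1, -, hne⟩ := hgA (k + 1) (by omega)
      simpa [show k + 1 ≠ m by omega, hkm, hk, hk1] using hne.symm

theorem exists_bijOn_Iio_card_of_ne {α : Type*} [Fintype α] {a b : α} (hab : a ≠ b) :
    ∃ d : ℕ → α, Set.BijOn d (Set.Iio (Fintype.card α)) Set.univ ∧
      d 0 = a ∧ d (Fintype.card α - 1) = b := by
  set m := Fintype.card α
  have hm : 1 < m := Fintype.one_lt_card_iff.2 ⟨a, b, hab⟩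
  let d₀ : ℕ → α := fun j => if hj : j < m then (Fintype.equivFin α).symm ⟨j, hj⟩ else a
  have hd₀ : Set.BijOn d₀ (Set.Iio m) Set.univ := by
    refine ⟨fun _ _ => trivial, fun i hi j hj hij => ?_, fun x _ => ?_⟩
    · simpa [d₀, show i < m from hi, show j < m from hj] using hij
    · have hx : (Fintype.equivFin α x : ℕ) < m := (Fintype.equivFin α x).isLt
      exact ⟨Fintype.equivFin α x, hx, by simp [d₀, hx]⟩
  have hinj {x y : α} (hxy : x ≠ y) : Function.Injective ![x, y] := by
    intro i j
    fin_cases i <;> fin_cases j <;> simp [hxy, hxy.symm]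
  have hends : d₀ 0 ≠ d₀ (m - 1) := fun h => by
    have := hd₀.injOn (show 0 < m by omega) (show m - 1 < m by omega) h
    omega
  obtain ⟨σ, hσ⟩ := Equiv.Perm.exists_extending_pair _ _ (hinj hends) (hinj hab)
  exact ⟨σ ∘ d₀, σ.bijective.bijOn_univ.comp hd₀, hσ 0, hσ 1⟩

theorem hasEulerTour_of_bijOn_of_closed_seq {V E : Type*} {F : E → Finset V} {m : ℕ}
    (hm : 2 ≤ m) {d : ℕ → E} (hd : Set.BijOn d (Set.Iio m) Set.univ) {w : ℕ → V}
    (hclosed : w 0 = w m)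
    (hw : ∀ i < m, w i ∈ F (d i) ∧ w (i + 1) ∈ F (d i) ∧ w i ≠ w (i + 1)) :
    HasEulerTour V E F := by
  refine ⟨⟨m, hm, fun i => w i, fun i => d i, fun i => (hw i i.2).1, fun i => (hw i i.2).2.1,
    fun i => (hw i i.2).2.2, fun i j h => Fin.ext (hd.injOn i.2 j.2 h), hclosed⟩,
    fun i j h => Fin.ext (hd.injOn i.2 j.2 h), fun x => ?_⟩
  obtain ⟨i, hi, rfl⟩ := hd.surjOn (Set.mem_univ x)
  exact ⟨⟨i, hi⟩, rfl⟩

theorem eulerTour_of_intersections_general {V E : Type*} [Fintype E]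
    [DecidableEq V]
    (F : E → Finset V)
    (h2 : ∀ e f : E, 2 ≤ (F e ∩ F f).card)
    (h3 : ∃ e f : E, e ≠ f ∧ 3 ≤ (F e ∩ F f).card) :
    HasEulerTour V E F := by
  obtain ⟨e, f, hef, hef3⟩ := h3
  obtain ⟨d, hd, hd0, hdf⟩ := exists_bijOn_Iio_card_of_ne hef
  have hm : 2 ≤ Fintype.card E := Fintype.one_lt_card_iff.2 ⟨e, f, hef⟩
  obtain ⟨w, hclosed, hw⟩ := exists_closed_seq_of_card_inter hm (fun j => F (d j))
    (fun j _ => h2 _ _) (by rwa [hd0, hdf, inter_comm])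
  exact hasEulerTour_of_bijOn_of_closed_seq hm hd hclosed hw

/-- A hypergraph with at least two edges in which every two edges
share at least 2 vertices, and some two distinct edges share at least 3
vertices, admits an Euler tour. -/
theorem eulerTour_of_intersections {V E : Type*} [Fintype V] [Nonempty V] [Fintype E]
    [DecidableEq V]
    (F : E → Finset V)
    (hE : 2 ≤ Fintype.card E)
    (h2 : ∀ e f : E, 2 ≤ (F e ∩ F f).card)
    (h3 : ∃ e f : E, e ≠ f ∧ 3 ≤ (F e ∩ F f).card) :
    HasEulerTour V E F :=
  eulerTour_of_intersections_general F h2 h3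
end

section
/- Let k ≥ 4, and let H be a 2-covering k-hypergraph of order n with at least two edges. If n ≤ 2k−3 or (k, n) = (4, 6), then H admits an Euler tour. -/
/-!
In a `k`-uniform hypergraph on `n` vertices any two edges share at least `2k - n` vertices, so
at least three when `n ≤ 2k - 3`. List the edges cyclically as `e₀, …, e_{m-1}`; an Euler tour
is then a choice of anchors `vᵢ ∈ eᵢ₋₁ ∩ eᵢ` with consecutive anchors distinct. Choosing them
greedily along the cycle only fails at the last anchor, which must avoid two chosen vertices,
so it suffices that one intersection of consecutive edges has three vertices (or that `m = 2`).
For `(k, n) = (4, 6)` every intersection has at least two vertices; if all have exactly two,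
the edge complements are pairwise disjoint pairs, so `m ≤ 3`, and for `m = 3` no vertex lies
in all three edges, which makes every choice of anchors work.
-/

open Finset

theorem Finset.card_add_card_le_card_inter_add_card {α : Type*} [Fintype α] [DecidableEq α]
    (s t : Finset α) : #s + #t ≤ #(s ∩ t) + Fintype.card α := by
  rw [← card_union_add_card_inter, add_comm]
  exact Nat.add_le_add_left (card_le_univ _) _

/-- List-colouring the path `a - u₀ - … - uₙ - b` with the ends precoloured: colour greedily
from the `b` end, so that only `u₀` has to avoid two colours fixed in advance. -/
theorem Finset.exists_path_listColoring {V : Type*} [DecidableEq V] :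
    ∀ (n : ℕ) (S : Fin (n + 1) → Finset V) (a b : V), (∀ i, 2 ≤ #(S i)) →
      (3 ≤ #(S 0) ∨ n = 0 ∧ a = b) →
      ∃ u : Fin (n + 1) → V, (∀ i, u i ∈ S i) ∧ u 0 ≠ a ∧ u (Fin.last n) ≠ b ∧
        ∀ i : Fin n, u i.castSucc ≠ u i.succ
  | 0, S, a, b, h2, h3 => by
    obtain ⟨x, hx⟩ : (S 0 \ {a, b}).Nonempty := by
      have hsd := le_card_sdiff {a, b} (S 0)
      have hab : #({a, b} : Finset V) ≤ 2 := card_le_two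
      rcases h3 with h3 | ⟨-, rfl⟩
      · exact card_pos.mp (by omega)
      · rw [pair_eq_singleton, card_singleton] at hsd; rw [pair_eq_singleton]
        exact card_pos.mp (by have := h2 0; omega)
    simp only [mem_sdiff, mem_insert, mem_singleton, not_or] at hx
    exact ⟨fun _ => x, fun i => Fin.fin_one_eq_zero i ▸ hx.1, hx.2.1, hx.2.2, Fin.elim0⟩
  | n + 1, S, a, b, h2, h3 => by
    obtain ⟨y, hy⟩ : (S (Fin.last _) \ {b}).Nonempty := by
      have hsd := le_card_sdiff {b} (S (Fin.last _))
      rw [card_singleton] at hsd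
      exact card_pos.mp (by have := h2 (Fin.last _); omega)
    rw [mem_sdiff, mem_singleton] at hy
    obtain ⟨u, hu, hu0, hlast, hne⟩ :=
      exists_path_listColoring n (Fin.init S) a y (fun i => h2 _)
        (.inl (by simpa [Fin.init] using h3))
    refine ⟨Fin.snoc u y, fun i => ?_, by simpa using hu0, by simpa using hy.2, fun i => ?_⟩
    · induction i using Fin.lastCases <;> simp_all [Fin.init]
    · induction i using Fin.lastCases with
      | last => simpa using hlast
      | cast j => rw [Fin.succ_castSucc, Fin.snoc_castSucc, Fin.snoc_castSucc]; exact hne j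

theorem Fin.exists_equiv_apply_zero_apply_one {E : Type*} [Fintype E] {n : ℕ}
    (hcard : Fintype.card E = n + 2) {x y : E} (hxy : x ≠ y) :
    ∃ e : Fin (n + 2) ≃ E, e 0 = x ∧ e 1 = y := by
  classical
  let g₀ := (Fintype.equivFinOfCardEq hcard).symm
  let g := g₀.trans (Equiv.swap (g₀ 0) x)
  have hg : g 0 = x := by simp [g]
  have hj : g.symm y ≠ 0 := fun h => hxy (by rw [← hg, ← h, Equiv.apply_symm_apply])
  refine ⟨(Equiv.swap 1 (g.symm y)).trans g, ?_, by simp⟩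
  rw [Equiv.trans_apply, Equiv.swap_apply_of_ne_of_ne zero_ne_one hj.symm, hg]

section EulerTour

variable {V E : Type*} [DecidableEq V] {F : E → Finset V}

theorem hasEulerTour_of_anchors {n : ℕ} (e : Fin (n + 2) → E) (he : Function.Bijective e)
    (a : V) (u : Fin (n + 1) → V)
    (ha : a ∈ F (e 0) ∩ F (e (Fin.last _)))
    (hu : ∀ i, u i ∈ F (e i.castSucc) ∩ F (e i.succ))
    (hu0 : u 0 ≠ a) (hlast : u (Fin.last n) ≠ a) (hne : ∀ i : Fin n, u i.castSucc ≠ u i.succ) :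
    HasEulerTour V E F := by
  simp only [mem_inter] at ha hu
  refine ⟨{ len := n + 2
            two_le_len := by omega
            verts := Fin.cons a (Fin.snoc u a)
            edges := e
            mem_left := fun i => ?_
            mem_right := fun i => ?_
            verts_ne := fun i => ?_
            edges_injective := he.injective
            closed := by simp }, he⟩
  · induction i using Fin.cases with
    | zero => simpa using ha.1
    | succ j => rw [← Fin.succ_castSucc]; simpa using (hu j).2
  · induction i using Fin.lastCases with
    | last => simpa using ha.2
    | cast j => simpa using (hu j).1
  · induction i using Fin.cases with
    | zero => simpa using hu0.symm
    | succ j =>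
      induction j using Fin.lastCases with
      | last =>
        rw [← Fin.succ_castSucc, Fin.cons_succ, Fin.cons_succ, Fin.snoc_castSucc, Fin.succ_last,
          Fin.snoc_last]
        exact hlast
      | cast k =>
        rw [← Fin.succ_castSucc, Fin.cons_succ, Fin.cons_succ, Fin.succ_castSucc,
          Fin.snoc_castSucc, Fin.snoc_castSucc]
        exact hne k

theorem hasEulerTour_of_equiv_fin {n : ℕ} (e : Fin (n + 2) ≃ E)
    (h2 : ∀ x y, x ≠ y → 2 ≤ #(F x ∩ F y)) (h3 : 3 ≤ #(F (e 0) ∩ F (e 1)) ∨ n = 0) :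
    HasEulerTour V E F := by
  have h2' : ∀ i j, i ≠ j → 2 ≤ #(F (e i) ∩ F (e j)) := fun i j h => h2 _ _ (e.injective.ne h)
  obtain ⟨a, ha⟩ : (F (e 0) ∩ F (e (Fin.last _))).Nonempty :=
    card_pos.mp (by have := h2' 0 (Fin.last _) (by simp [Fin.ext_iff]); omega)
  obtain ⟨u, hu, hu0, hlast, hne⟩ :=
    exists_path_listColoring n (fun i => F (e i.castSucc) ∩ F (e i.succ)) a a
      (fun i => h2' _ _ (Fin.castSucc_lt_succ (i := i)).ne) (h3.imp (by simpa using ·) (⟨·, rfl⟩))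
  exact hasEulerTour_of_anchors e e.bijective a u ha hu hu0 hlast hne

theorem hasEulerTour_of_two_le_card_inter [Fintype E] (hE : 2 ≤ Fintype.card E)
    (h2 : ∀ x y, x ≠ y → 2 ≤ #(F x ∩ F y))
    (h3 : Fintype.card E = 2 ∨ ∃ x y, x ≠ y ∧ 3 ≤ #(F x ∩ F y)) :
    HasEulerTour V E F := by
  obtain ⟨n, hn⟩ : ∃ n, Fintype.card E = n + 2 := ⟨_, (Nat.sub_add_cancel hE).symm⟩
  rcases h3 with h3 | ⟨x, y, hxy, h3⟩
  · exact hasEulerTour_of_equiv_fin (Fintype.equivFinOfCardEq hn).symm h2 (.inr (by omega))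
  · obtain ⟨e, rfl, rfl⟩ := Fin.exists_equiv_apply_zero_apply_one hn hxy
    exact hasEulerTour_of_equiv_fin e h2 (.inl h3)

theorem hasEulerTour_of_card_eq_three [Fintype E] (hE : Fintype.card E = 3)
    (h1 : ∀ x y, x ≠ y → (F x ∩ F y).Nonempty) (hcompl : ∀ v, ∃ x, v ∉ F x) :
    HasEulerTour V E F := by
  let e : Fin 3 ≃ E := (Fintype.equivFinOfCardEq hE).symm
  have hcommon : ∀ v, v ∈ F (e 0) → v ∈ F (e 1) → v ∈ F (e 2) → False := by
    intro v h0 h1 h2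
    obtain ⟨x, hx⟩ := hcompl v
    rw [← e.apply_symm_apply x] at hx
    generalize e.symm x = i at hx
    fin_cases i <;> contradiction
  obtain ⟨a, ha⟩ := h1 (e 0) (e 2) (by simp)
  obtain ⟨p, hp⟩ := h1 (e 0) (e 1) (by simp)
  obtain ⟨q, hq⟩ := h1 (e 1) (e 2) (by simp)
  refine hasEulerTour_of_anchors (n := 1) e e.bijective a ![p, q] ha (fun i => ?_) ?_ ?_ ?_
  · fin_cases i
    · simpa using hp
    · simpa using hq
  all_goals simp only [mem_inter] at ha hp hq
  · rintro rfl; exact hcommon p hp.1 hp.2 ha.2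
  · rintro rfl; exact hcommon q ha.1 hq.1 hq.2
  · intro i hpq
    fin_cases i
    replace hpq : p = q := by simpa using hpq
    exact hcommon p hp.1 hp.2 (hpq ▸ hq.2)

theorem hasEulerTour_of_union_eq_univ [Fintype V] [Fintype E] {c : ℕ} (hc : 0 < c)
    (hF : ∀ x, #(F x)ᶜ = c) (hV : Fintype.card V = 3 * c) (hE : 2 ≤ Fintype.card E)
    (h2 : ∀ x y, x ≠ y → 2 ≤ #(F x ∩ F y)) (hunion : ∀ x y, x ≠ y → F x ∪ F y = univ) :
    HasEulerTour V E F := by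
  have hdisj : ((univ : Finset E) : Set E).PairwiseDisjoint fun x => (F x)ᶜ := by
    intro x _ y _ hxy
    rw [Function.onFun, disjoint_compl_left_iff]
    intro v hv
    have hv' : v ∈ F x ∪ F y := by rw [hunion x y hxy]; exact mem_univ v
    exact (mem_union.1 hv').resolve_right (mem_compl.1 hv)
  have hcard : #(univ.biUnion fun x => (F x)ᶜ) = Fintype.card E * c := by
    rw [card_biUnion hdisj, sum_congr rfl fun x _ => hF x, sum_const, card_univ, smul_eq_mul]
  have hle := card_le_univ (univ.biUnion fun x => (F x)ᶜ)
  obtain hm | hm : Fintype.card E = 2 ∨ Fintype.card E = 3 := by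
    have : Fintype.card E ≤ 3 := by nlinarith
    omega
  · exact hasEulerTour_of_two_le_card_inter hE h2 (.inl hm)
  · refine hasEulerTour_of_card_eq_three hm (fun x y hxy => card_pos.mp (by linarith [h2 x y hxy]))
      fun v => ?_
    have hcover := eq_univ_of_card _ (hcard.trans (by rw [hm, hV]))
    have hv : v ∈ univ.biUnion fun x => (F x)ᶜ := by rw [hcover]; exact mem_univ v
    simpa using hv

end EulerTour

theorem twoCovering_smallOrder_eulerTour_general {V E : Type*} [Fintype V] [Fintype E]
    (k : ℕ) (hk : 4 ≤ k)
    (F : E → Finset V)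
    (hcov : IsCoveringHypergraph V E F 2 k)
    (hE : 2 ≤ Fintype.card E)
    (hn : Fintype.card V ≤ 2 * k - 3 ∨ (k = 4 ∧ Fintype.card V = 6)) :
    HasEulerTour V E F := by
  classical
  have hinter : ∀ x y, 2 * k ≤ #(F x ∩ F y) + Fintype.card V := fun x y => by
    have := card_add_card_le_card_inter_add_card (F x) (F y)
    rw [hcov.1, hcov.1] at this
    omega
  rcases hn with hn | ⟨rfl, hn⟩
  · obtain ⟨x, y, hxy⟩ := Fintype.exists_pair_of_one_lt_card hE
    have h3 : ∀ x y, 3 ≤ #(F x ∩ F y) := fun x y => by have := hinter x y; omega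
    exact hasEulerTour_of_two_le_card_inter hE (fun x y _ => (h3 x y).trans' (by norm_num))
      (.inr ⟨x, y, hxy, h3 x y⟩)
  have h2 : ∀ x y, 2 ≤ #(F x ∩ F y) := fun x y => by have := hinter x y; omega
  by_cases h3 : ∃ x y, x ≠ y ∧ 3 ≤ #(F x ∩ F y)
  · exact hasEulerTour_of_two_le_card_inter hE (fun x y _ => h2 x y) (.inr h3)
  push Not at h3
  refine hasEulerTour_of_union_eq_univ two_pos (fun x => by rw [card_compl, hcov.1, hn]; rfl)
    (by omega) hE (fun x y _ => h2 x y) fun x y hxy => eq_univ_of_card _ ?_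
  have hsum := card_union_add_card_inter (F x) (F y)
  rw [hcov.1, hcov.1] at hsum
  have := h3 x y hxy
  have := h2 x y
  omega

/-- For `k ≥ 4`, a 2-covering k-hypergraph of order `n` with at
least two edges admits an Euler tour provided `n ≤ 2k−3` or `(k,n) = (4,6)`. -/
theorem twoCovering_smallOrder_eulerTour {V E : Type*} [Fintype V] [Nonempty V] [Fintype E]
    (k : ℕ) (hk : 4 ≤ k)
    (F : E → Finset V)
    (hcov : IsCoveringHypergraph V E F 2 k)
    (hE : 2 ≤ Fintype.card E)
    (hn : Fintype.card V ≤ 2 * k - 3 ∨ (k = 4 ∧ Fintype.card V = 6)) :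
    HasEulerTour V E F :=
  twoCovering_smallOrder_eulerTour_general k hk F hcov hE hn
end

section
/- Let ℓ and k be integers with 3 ≤ ℓ < k, let H = (V, E) be an ℓ-covering k-hypergraph, and let v ∈ V. Suppose for each edge e ∈ E a vertex u(e) ∈ e is chosen such that u(e) = v whenever v ∈ e. Then the hypergraph H* with vertex set V ∖ {v} and edge multiset { e ∖ {u(e)} : e ∈ E } is an (ℓ−1)-covering (k−1)-hypergraph. -/
/-! The (ℓ−1)-set `S` avoiding `v` extends to the ℓ-set `S ∪ {v}`, which lies in some edge `e`;
as `v ∈ e`, the vertex removed from `e` is `v` itself, so `S ⊆ e ∖ {u e}`. -/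

namespace IsCoveringHypergraph

variable {V E : Type*} [DecidableEq V] {F : E → Finset V} {ℓ k : ℕ}

theorem card_erase (hcov : IsCoveringHypergraph V E F ℓ k) {e : E} {a : V} (ha : a ∈ F e) :
    ((F e).erase a).card = k - 1 := by
  rw [Finset.card_erase_of_mem ha, hcov.1 e]

theorem exists_insert_subset (hcov : IsCoveringHypergraph V E F ℓ k) (hℓ : 1 ≤ ℓ)
    {S : Finset V} {v : V} (hvS : v ∉ S) (hS : S.card = ℓ - 1) :
    ∃ e : E, insert v S ⊆ F e :=
  hcov.2 _ (by rw [Finset.card_insert_of_notMem hvS, hS]; omega)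

end IsCoveringHypergraph

theorem contraction_covering_general {V E : Type*}
    [DecidableEq V]
    (ℓ k : ℕ) (hℓ : 3 ≤ ℓ)
    (F : E → Finset V)
    (hcov : IsCoveringHypergraph V E F ℓ k)
    (v : V) (u : E → V)
    (hu : ∀ e : E, u e ∈ F e)
    (huv : ∀ e : E, v ∈ F e → u e = v) :
    (∀ e : E, ((F e).erase (u e)).card = k - 1) ∧
    (∀ S : Finset V, v ∉ S → S.card = ℓ - 1 → ∃ e : E, S ⊆ (F e).erase (u e)) := by
  refine ⟨fun e => hcov.card_erase (hu e), fun S hvS hS => ?_⟩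
  obtain ⟨e, he⟩ := hcov.exists_insert_subset (by omega) hvS hS
  rw [Finset.insert_subset_iff] at he
  refine ⟨e, Finset.subset_erase.2 ⟨he.2, ?_⟩⟩
  rwa [huv e he.1]

/-- For `3 ≤ ℓ < k`, if `H` is an ℓ-covering k-hypergraph,
`v` a vertex, and for each edge `e` a vertex `u e ∈ e` is chosen with
`u e = v` whenever `v ∈ e`, then the hypergraph on `V ∖ {v}` with edges
`e ∖ {u e}` is an (ℓ−1)-covering (k−1)-hypergraph. -/
theorem contraction_covering {V E : Type*} [Fintype V] [Nonempty V] [Fintype E]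
    [DecidableEq V]
    (ℓ k : ℕ) (hℓ : 3 ≤ ℓ) (hℓk : ℓ < k)
    (F : E → Finset V)
    (hcov : IsCoveringHypergraph V E F ℓ k)
    (v : V) (u : E → V)
    (hu : ∀ e : E, u e ∈ F e)
    (huv : ∀ e : E, v ∈ F e → u e = v) :
    (∀ e : E, ((F e).erase (u e)).card = k - 1) ∧
    (∀ S : Finset V, v ∉ S → S.card = ℓ - 1 → ∃ e : E, S ⊆ (F e).erase (u e)) :=
  contraction_covering_general ℓ k hℓ F hcov v u hu huv
end
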